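/- Let F be a first-order formula over L, let E be an EQ-formula over L, and let σ be a finite substitution whose equivalence class corresponds to the class of E under the isomorphism between the lattice of EQ-formulas and the lattice of finite substitutions (equivalently, Sol_M(E) = Inst_M(σ) for every model M of FEA(L)). Then FEA(L) ⊨ Fσ if and only if FEA(L) ⊨ E → F; equivalently, the formula (∀)(Fσ) ↔ (∀)(E → F) is true in every model of FEA(L), where (∀) denotes universal closure. -/

import Mathlib

/-- A first-order language: function symbols with arities and predicate
symbols with arities.  Variables are natural numbers. -/
structure FOLang where
  Func : Type
  farity : Func → ℕ
  Pred : Type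
  parity : Pred → ℕ

/-- The language has at least one constant. -/
def FOLang.HasConst (L : FOLang) : Prop := ∃ f : L.Func, L.farity f = 0

/-- Terms over a language. -/
inductive FOTerm (L : FOLang) : Type where
  | var : ℕ → FOTerm L
  | func : (f : L.Func) → (Fin (L.farity f) → FOTerm L) → FOTerm L

namespace FOTerm

variable {L : FOLang}

/-- The (finite) set of variables occurring in a term. -/
def vars : FOTerm L → Finset ℕ
  | .var x => {x}
  | .func _ ts => Finset.univ.biUnion fun i => (ts i).vars

/-- Application of a (total) substitution to a term: simultaneously replace
every variable `x` by the term `f x`. -/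
def applyT (f : ℕ → FOTerm L) : FOTerm L → FOTerm L
  | .var x => f x
  | .func g ts => .func g fun i => (ts i).applyT f

end FOTerm

/-- A pre-interpretation: a non-empty universe together with an
interpretation of the function symbols. -/
structure FOStruc (L : FOLang) where
  carrier : Type
  inhab : Nonempty carrier
  funcs : (f : L.Func) → (Fin (L.farity f) → carrier) → carrier

/-- Evaluation of a term under a valuation. -/
def FOTerm.eval {L : FOLang} (M : FOStruc L) (h : ℕ → M.carrier) : FOTerm L → M.carrier
  | .var x => h x
  | .func f ts => M.funcs f fun i => (ts i).eval M h

/-- The set of `M`-instances of a term: values of the term under all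
valuations. -/
def InstT {L : FOLang} (M : FOStruc L) (t : FOTerm L) : Set M.carrier :=
  { a | ∃ h : ℕ → M.carrier, t.eval M h = a }

/-- `M` is a model of the free equality axioms `FEA(L)`. -/
structure IsFEA {L : FOLang} (M : FOStruc L) : Prop where
  inj : ∀ f : L.Func, Function.Injective (M.funcs f)
  disj : ∀ f g : L.Func, f ≠ g → ∀ a b, M.funcs f a ≠ M.funcs g b
  occ : ∀ (x : ℕ) (t : FOTerm L), t ≠ .var x → x ∈ t.vars →
      ∀ h : ℕ → M.carrier, h x ≠ t.eval M h

/-- The domain has at least two elements. -/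
def FOStruc.Nontriv {L : FOLang} (M : FOStruc L) : Prop :=
  ∃ a b : M.carrier, a ≠ b

/-- The difference set `Diff(s,t)`: `InDiff s t (s',t')` means the pair
`(s',t')` belongs to `Diff(s,t)`. -/
inductive InDiff {L : FOLang} : FOTerm L → FOTerm L → FOTerm L × FOTerm L → Prop where
  | var (x : ℕ) : InDiff (.var x) (.var x) (.var x, .var x)
  | varVar {x y : ℕ} : x ≠ y → InDiff (.var x) (.var y) (.var x, .var y)
  | varFunc (x : ℕ) (f : L.Func) (ts : Fin (L.farity f) → FOTerm L) :
      InDiff (.var x) (.func f ts) (.var x, .func f ts)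
  | funcVar (f : L.Func) (ss : Fin (L.farity f) → FOTerm L) (y : ℕ) :
      InDiff (.func f ss) (.var y) (.func f ss, .var y)
  | funcFunc {f g : L.Func} (ss : Fin (L.farity f) → FOTerm L)
      (ts : Fin (L.farity g) → FOTerm L) : f ≠ g →
      InDiff (.func f ss) (.func g ts) (.func f ss, .func g ts)
  | func {f : L.Func} (ss ts : Fin (L.farity f) → FOTerm L) (i : Fin (L.farity f))
      {p : FOTerm L × FOTerm L} :
      InDiff (ss i) (ts i) p → InDiff (.func f ss) (.func f ts) p
/-- An interpretation: a pre-interpretation together with an interpretation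
of the predicate symbols. -/
structure FOInterp (L : FOLang) extends FOStruc L where
  preds : (p : L.Pred) → (Fin (L.parity p) → carrier) → Prop

/-- First-order formulas. -/
inductive FOForm (L : FOLang) : Type where
  | tru : FOForm L
  | fal : FOForm L
  | eq : FOTerm L → FOTerm L → FOForm L
  | atom : (p : L.Pred) → (Fin (L.parity p) → FOTerm L) → FOForm L
  | not : FOForm L → FOForm L
  | and : FOForm L → FOForm L → FOForm L
  | or : FOForm L → FOForm L → FOForm L
  | imp : FOForm L → FOForm L → FOForm L
  | iff : FOForm L → FOForm L → FOForm L
  | ex : ℕ → FOForm L → FOForm L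
  | all : ℕ → FOForm L → FOForm L

namespace FOForm

variable {L : FOLang}

/-- Tarskian satisfaction of a formula in an interpretation under a valuation. -/
def Sat (I : FOInterp L) (h : ℕ → I.carrier) : FOForm L → Prop
  | .tru => True
  | .fal => False
  | .eq s t => s.eval I.toFOStruc h = t.eval I.toFOStruc h
  | .atom p ts => I.preds p fun i => (ts i).eval I.toFOStruc h
  | .not F => ¬ F.Sat I h
  | .and F G => F.Sat I h ∧ G.Sat I h
  | .or F G => F.Sat I h ∨ G.Sat I h
  | .imp F G => F.Sat I h → G.Sat I h
  | .iff F G => F.Sat I h ↔ G.Sat I h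
  | .ex x F => ∃ d : I.carrier, F.Sat I (Function.update h x d)
  | .all x F => ∀ d : I.carrier, F.Sat I (Function.update h x d)

/-- Free variables of a formula. -/
def fv : FOForm L → Finset ℕ
  | .tru => ∅
  | .fal => ∅
  | .eq s t => s.vars ∪ t.vars
  | .atom _ ts => Finset.univ.biUnion fun i => (ts i).vars
  | .not F => F.fv
  | .and F G => F.fv ∪ G.fv
  | .or F G => F.fv ∪ G.fv
  | .imp F G => F.fv ∪ G.fv
  | .iff F G => F.fv ∪ G.fv
  | .ex x F => F.fv.erase x
  | .all x F => F.fv.erase x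

end FOForm

/-- The interpretation obtained from a pre-interpretation by interpreting
every predicate symbol as the empty relation (for formulas without atoms
the choice is irrelevant). -/
def FOStruc.toInterp {L : FOLang} (M : FOStruc L) : FOInterp L :=
  { toFOStruc := M, preds := fun _ _ => False }

/-- Satisfaction of an (equational) formula in a pre-interpretation. -/
def ESat {L : FOLang} (M : FOStruc L) (h : ℕ → M.carrier) (F : FOForm L) : Prop :=
  F.Sat M.toInterp h

/-- The set of solutions of a formula in a pre-interpretation. -/
def SolE {L : FOLang} (M : FOStruc L) (F : FOForm L) : Set (ℕ → M.carrier) :=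
  { h | ESat M h F }

/-- EQ-formulas: built from `True`, `False` and equations using `∧` and `∃`. -/
inductive IsEQ {L : FOLang} : FOForm L → Prop where
  | tru : IsEQ .tru
  | fal : IsEQ .fal
  | eq (s t : FOTerm L) : IsEQ (.eq s t)
  | and {F G : FOForm L} : IsEQ F → IsEQ G → IsEQ (.and F G)
  | ex (x : ℕ) {F : FOForm L} : IsEQ F → IsEQ (.ex x F)

/-- Equational formulas: first-order formulas with no atoms other than
equations. -/
inductive IsEquational {L : FOLang} : FOForm L → Prop where
  | tru : IsEquational .tru
  | fal : IsEquational .fal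
  | eq (s t : FOTerm L) : IsEquational (.eq s t)
  | not {F : FOForm L} : IsEquational F → IsEquational (.not F)
  | and {F G : FOForm L} : IsEquational F → IsEquational G → IsEquational (.and F G)
  | or {F G : FOForm L} : IsEquational F → IsEquational G → IsEquational (.or F G)
  | imp {F G : FOForm L} : IsEquational F → IsEquational G → IsEquational (.imp F G)
  | iff {F G : FOForm L} : IsEquational F → IsEquational G → IsEquational (.iff F G)
  | ex (x : ℕ) {F : FOForm L} : IsEquational F → IsEquational (.ex x F)
  | all (x : ℕ) {F : FOForm L} : IsEquational F → IsEquational (.all x F)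

/-- `F ≼ F'` : `F → F'` is true in every model of `FEA(L)`. -/
def EQle {L : FOLang} (F F' : FOForm L) : Prop :=
  ∀ M : FOStruc L, IsFEA M → ∀ h : ℕ → M.carrier, ESat M h F → ESat M h F'

/-- `F ≈ F'` : `F ↔ F'` is true in every model of `FEA(L)`. -/
def EQequiv {L : FOLang} (F F' : FOForm L) : Prop := EQle F F' ∧ EQle F' F

/-- `F ≺ F'`. -/
def EQlt {L : FOLang} (F F' : FOForm L) : Prop := EQle F F' ∧ ¬ EQequiv F F'

/-- The conjunction `x₁ = s₁ ∧ … ∧ xₙ = sₙ`. -/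
def conjOf {L : FOLang} : List (ℕ × FOTerm L) → FOForm L
  | [] => .tru
  | [p] => .eq (.var p.1) p.2
  | p :: rest => .and (.eq (.var p.1) p.2) (conjOf rest)

/-- The formula `(∃ z₁) … (∃ z_k) F`. -/
def exOf {L : FOLang} (zs : List ℕ) (F : FOForm L) : FOForm L :=
  zs.foldr .ex F

/-- The disjunction `F₁ ∨ … ∨ Fₙ`. -/
def disjOf {L : FOLang} : List (FOForm L) → FOForm L
  | [] => .fal
  | [F] => F
  | F :: rest => .or F (disjOf rest)

/-- A formula is in solved form if it is `True`, `False`, or of the shape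
`∃ z₁ … ∃ z_k (x₁ = s₁ ∧ … ∧ xₙ = sₙ)` where the `xᵢ` and `z_j` are
pairwise distinct, no `xᵢ` occurs in any right-hand side, every `z_j`
occurs in the conjunction, and no `sᵢ` is one of the `z_j`. -/
def SolvedForm {L : FOLang} (F : FOForm L) : Prop :=
  F = .tru ∨ F = .fal ∨
    ∃ (zs : List ℕ) (eqs : List (ℕ × FOTerm L)),
      eqs ≠ [] ∧
      F = exOf zs (conjOf eqs) ∧
      (eqs.map Prod.fst ++ zs).Nodup ∧
      (∀ p ∈ eqs, ∀ q ∈ eqs, p.1 ∉ q.2.vars) ∧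
      (∀ z ∈ zs, ∃ p ∈ eqs, z ∈ p.2.vars) ∧
      (∀ z ∈ zs, ∀ p ∈ eqs, p.2 ≠ .var z)

/-- The projection of an EQ-formula onto a finite set of variables:
existentially quantify the free variables not in `X`; the projection of
`False` is `False`. -/
def projE {L : FOLang} (E : FOForm L) (X : Finset ℕ) : FOForm L :=
  match E with
  | .fal => .fal
  | E => exOf ((E.fv \ X).sort (· ≤ ·)) E

/-- The universal closure of a formula. -/
def univClosure {L : FOLang} (F : FOForm L) : FOForm L :=
  (F.fv.sort (· ≤ ·)).foldr .all F

/-- A formula is valid if it is true in every interpretation (under every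
valuation). -/
def FOValid {L : FOLang} (F : FOForm L) : Prop :=
  ∀ (I : FOInterp L) (h : ℕ → I.carrier), F.Sat I h

/-- An EQ-formula is consistent if it has a solution in some model of the
free equality axioms. -/
def EQConsistent {L : FOLang} (E : FOForm L) : Prop :=
  ∃ M : FOStruc L, IsFEA M ∧ ∃ h : ℕ → M.carrier, ESat M h E
/-- Ground terms: terms with no variables. -/
def GroundTerm (L : FOLang) : Type := { t : FOTerm L // t.vars = ∅ }

/-- The Herbrand pre-interpretation: its domain is the set of ground terms
and function symbols are interpreted formally. -/
def Herbrand (L : FOLang) (hc : L.HasConst) : FOStruc L where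
  carrier := GroundTerm L
  inhab := by
    obtain ⟨f, hf⟩ := hc
    refine ⟨⟨.func f (fun i => Fin.elim0 (Fin.cast hf i)), ?_⟩⟩
    ext x
    simp only [FOTerm.vars, Finset.mem_biUnion, Finset.mem_univ, true_and,
      Finset.notMem_empty, iff_false, not_exists]
    intro i
    exact Fin.elim0 (Fin.cast hf i)
  funcs := fun f ts => ⟨.func f (fun i => (ts i).1), by
    ext x
    simp only [FOTerm.vars, Finset.mem_biUnion, Finset.mem_univ, true_and,
      Finset.notMem_empty, iff_false, not_exists]
    intro i hx
    rw [(ts i).2] at hx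
    exact Finset.notMem_empty x hx⟩

/-- The language obtained by adding a countably infinite set of new
constants. -/
def addConsts (L : FOLang) : FOLang where
  Func := L.Func ⊕ ℕ
  farity := Sum.elim L.farity fun _ => 0
  Pred := L.Pred
  parity := L.parity

/-- The canonical embedding of terms into the extended language. -/
def FOTerm.lift {L : FOLang} : FOTerm L → FOTerm (addConsts L)
  | .var x => .var x
  | .func f ts => .func (Sum.inl f) fun i => (ts i).lift

/-- The canonical embedding of formulas into the extended language. -/
def FOForm.lift {L : FOLang} : FOForm L → FOForm (addConsts L)
  | .tru => .tru
  | .fal => .fal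
  | .eq s t => .eq s.lift t.lift
  | .atom p ts => .atom p fun i => (ts i).lift
  | .not F => .not F.lift
  | .and F G => .and F.lift G.lift
  | .or F G => .or F.lift G.lift
  | .imp F G => .imp F.lift G.lift
  | .iff F G => .iff F.lift G.lift
  | .ex x F => .ex x F.lift
  | .all x F => .all x F.lift
/-- A finite substitution: a finite set of variables (its domain) together
with an assignment of terms to variables which is the identity outside the
domain. -/
structure FinSubst (L : FOLang) where
  dom : Finset ℕ
  map : ℕ → FOTerm L
  outside : ∀ x ∉ dom, map x = .var x

namespace FinSubst

variable {L : FOLang}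

/-- `Range(σ)`: the set of variables occurring in the terms `σ x`, `x ∈ Dom(σ)`. -/
def range (σ : FinSubst L) : Finset ℕ :=
  σ.dom.biUnion fun x => (σ.map x).vars

/-- `θ` is an extension of `σ`. -/
def Extends (θ σ : FinSubst L) : Prop :=
  σ.dom ⊆ θ.dom ∧ ∀ x ∈ σ.dom, θ.map x = σ.map x

/-- `θ` is a regular extension of `σ`: it extends `σ` and maps
`Dom(θ) \ Dom(σ)` injectively into the variables not in `Range(σ)`. -/
def RegExt (θ σ : FinSubst L) : Prop :=
  Extends θ σ ∧
  (∀ x ∈ θ.dom, x ∉ σ.dom → ∃ y : ℕ, y ∉ σ.range ∧ θ.map x = .var y) ∧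
  Set.InjOn θ.map ↑(θ.dom \ σ.dom)

/-- The set of `M`-instances of a substitution. -/
def Inst {L : FOLang} (M : FOStruc L) (σ : FinSubst L) : Set (ℕ → M.carrier) :=
  { h | ∃ g : ℕ → M.carrier, ∀ x ∈ σ.dom, h x = (σ.map x).eval M g }

open Classical in
/-- The restriction of `σ` to `Dom(σ) ∩ X`. -/
noncomputable def restrict (σ : FinSubst L) (X : Set ℕ) : FinSubst L where
  dom := σ.dom.filter fun x => x ∈ X
  map := fun x => if x ∈ σ.dom ∧ x ∈ X then σ.map x else .var x
  outside := fun x hx => if_neg fun h => hx (Finset.mem_filter.2 ⟨h.1, h.2⟩)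

/-- The composition `σθ`, defined on `Dom(σ)` by `x ↦ (σ x)θ`. -/
def comp (σ θ : FinSubst L) : FinSubst L where
  dom := σ.dom
  map := fun x => if x ∈ σ.dom then (σ.map x).applyT θ.map else .var x
  outside := fun _ hx => if_neg hx

/-- `σ ≼ θ` : `θ` is more general than `σ`. -/
def Le (σ θ : FinSubst L) : Prop :=
  ∃ σ' θ' τ : FinSubst L,
    RegExt σ' σ ∧ RegExt θ' θ ∧ σ'.dom = θ'.dom ∧
    θ'.range ⊆ τ.dom ∧ σ' = θ'.comp τ

/-- `σ ≈ θ`. -/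
def Equiv (σ θ : FinSubst L) : Prop := Le σ θ ∧ Le θ σ

/-- A permutation: a substitution mapping its domain injectively to
variables. -/
def IsPerm (τ : FinSubst L) : Prop :=
  (∀ x ∈ τ.dom, ∃ y : ℕ, τ.map x = .var y) ∧ Set.InjOn τ.map ↑τ.dom

/-- The empty substitution. -/
def empty (L : FOLang) : FinSubst L where
  dom := ∅
  map := fun x => .var x
  outside := fun _ _ => rfl

/-- The kernel of a substitution: the intersection of all sets `X` of
variables such that `σ↾X ≈ σ`. -/
def kernel (σ : FinSubst L) : Set ℕ :=
  ⋂₀ { X : Set ℕ | Equiv (σ.restrict X) σ }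

end FinSubst

noncomputable section

theorem exists_notin_finset (s : Finset ℕ) : ∃ n : ℕ, n ∉ s :=
  ⟨s.sup id + 1, fun h => by
    have := Finset.le_sup (f := id) h
    simp only [id] at this
    omega⟩

/-- The first variable not belonging to a given finite set of variables. -/
def freshVar (s : Finset ℕ) : ℕ := Nat.find (exists_notin_finset s)

/-- Insert a binding into a substitution. -/
def FinSubst.insertB {L : FOLang} (σ : FinSubst L) (x : ℕ) (t : FOTerm L) :
    FinSubst L where
  dom := insert x σ.dom
  map := Function.update σ.map x t
  outside := by
    intro z hz
    have hzx : z ≠ x := fun h => hz (h ▸ Finset.mem_insert_self x σ.dom)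
    have hzd : z ∉ σ.dom := fun h => hz (Finset.mem_insert_of_mem h)
    rw [Function.update_of_ne hzx]
    exact σ.outside z hzd

/-- One step of the regular-extension procedure: extend the substitution
with a binding for `x` (to itself if possible, otherwise to the first
variable not occurring in the range). -/
def regStep {L : FOLang} (acc : FinSubst L) (x : ℕ) : FinSubst L :=
  if x ∈ acc.dom then acc
  else acc.insertB x (.var (if x ∈ acc.range then freshVar acc.range else x))

/-- Restrict `σ` to the free variables of `F` and extend the result
regularly to a substitution whose domain is exactly `fv F`. -/
def FinSubst.extendFV {L : FOLang} (σ : FinSubst L) (F : FOForm L) : FinSubst L :=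
  (F.fv.sort (· ≤ ·)).foldl regStep (σ.restrict ↑F.fv)

/-- Capture-avoiding simultaneous substitution on formulas (bound variables
are renamed as needed). -/
def FOForm.applyF {L : FOLang} (f : ℕ → FOTerm L) : FOForm L → FOForm L
  | .tru => .tru
  | .fal => .fal
  | .eq s t => .eq (s.applyT f) (t.applyT f)
  | .atom p ts => .atom p fun i => (ts i).applyT f
  | .not F => .not (F.applyF f)
  | .and F G => .and (F.applyF f) (G.applyF f)
  | .or F G => .or (F.applyF f) (G.applyF f)
  | .imp F G => .imp (F.applyF f) (G.applyF f)
  | .iff F G => .iff (F.applyF f) (G.applyF f)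
  | .ex x G =>
      let R : Finset ℕ := (G.fv.erase x).biUnion fun z => (f z).vars
      let y : ℕ := if x ∈ R then freshVar R else x
      .ex y (G.applyF (Function.update f x (.var y)))
  | .all x G =>
      let R : Finset ℕ := (G.fv.erase x).biUnion fun z => (f z).vars
      let y : ℕ := if x ∈ R then freshVar R else x
      .all y (G.applyF (Function.update f x (.var y)))

/-- The application `Fσ` of a finite substitution to a formula: restrict
`σ` to the free variables of `F`, extend regularly to all of `fv F`, and
substitute capture-avoidingly. -/
def FOForm.applyS {L : FOLang} (σ : FinSubst L) (F : FOForm L) : FOForm L :=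
  F.applyF (σ.extendFV F).map

end
/-- The set of finite substitutions together with an added bottom element
`⊥` (represented by `none`): the extended preorder. -/
def LeBot {L : FOLang} : Option (FinSubst L) → Option (FinSubst L) → Prop
  | none, _ => True
  | some _, none => False
  | some σ, some θ => FinSubst.Le σ θ

/-- The induced equivalence on `Subst⊥`. -/
def EquivBot {L : FOLang} (a b : Option (FinSubst L)) : Prop :=
  LeBot a b ∧ LeBot b a

/-- The quotient of `Subst⊥` by `≈`. -/
def SubstQuot (L : FOLang) : Type := Quot (EquivBot (L := L))

/-- The induced partial order on the quotient `Subst⊥/≈`. -/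
def SubstQuotLe {L : FOLang} (a b : SubstQuot L) : Prop :=
  ∃ s t : Option (FinSubst L), Quot.mk _ s = a ∧ Quot.mk _ t = b ∧ LeBot s t

/-- EQ-formulas as a subtype. -/
def EQSub (L : FOLang) : Type := { F : FOForm L // IsEQ F }

/-- The quotient of the set of EQ-formulas by `≈`. -/
def EQQuot (L : FOLang) : Type :=
  Quot (fun a b : EQSub L => EQequiv a.1 b.1)

/-- The induced partial order on the quotient of EQ-formulas. -/
def EQQuotLe {L : FOLang} (a b : EQQuot L) : Prop :=
  ∃ E E' : EQSub L, Quot.mk _ E = a ∧ Quot.mk _ E' = b ∧ EQle E.1 E'.1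

/-- The substitution `{x₁↦s₁, …, xₙ↦sₙ, y₁↦y₁, …, y_k↦y_k}` associated
with a solved form with equations `eqs` and parameters `params`. -/
theorem lookup_eq_none_of_not_mem {L : FOLang} (x : ℕ) :
    ∀ eqs : List (ℕ × FOTerm L), x ∉ eqs.map Prod.fst → eqs.lookup x = none := by
  intro eqs
  induction eqs with
  | nil => intro _; rfl
  | cons p rest ih =>
    intro hx1
    have hp : p.1 ≠ x := by
      intro h
      exact hx1 (by simp [h])
    have hr : x ∉ rest.map Prod.fst := fun h => hx1 (by simp [h])
    have hxp : (x == p.1) = false := beq_eq_false_iff_ne.mpr fun h => hp h.symm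
    simp only [List.lookup, hxp]
    exact ih hr

def solvedSubst {L : FOLang} (eqs : List (ℕ × FOTerm L)) (params : Finset ℕ) :
    FinSubst L where
  dom := (eqs.map Prod.fst).toFinset ∪ params
  map := fun x => (eqs.lookup x).getD (.var x)
  outside := by
    intro x hx
    have hx1 : x ∉ eqs.map Prod.fst := fun h =>
      hx (Finset.mem_union_left _ (List.mem_toFinset.2 h))
    simp [lookup_eq_none_of_not_mem x eqs hx1]
section Aux

variable {L : FOLang}

theorem freshVar_spec (s : Finset ℕ) : freshVar s ∉ s := Nat.find_spec (exists_notin_finset s)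

theorem eval_congr (M : FOStruc L) (t : FOTerm L) {h h' : ℕ → M.carrier}
    (hh : ∀ x ∈ t.vars, h x = h' x) : t.eval M h = t.eval M h' := by
  induction t with
  | var x => exact hh x (by simp [FOTerm.vars])
  | func f ts ih =>
    simp only [FOTerm.eval]
    congr 1
    funext i
    exact ih i fun x hx => hh x (by
      simp only [FOTerm.vars, Finset.mem_biUnion, Finset.mem_univ, true_and]
      exact ⟨i, hx⟩)

theorem eval_applyT (M : FOStruc L) (f : ℕ → FOTerm L) (t : FOTerm L) (h : ℕ → M.carrier) :
    (t.applyT f).eval M h = t.eval M fun x => (f x).eval M h := by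
  induction t with
  | var x => rfl
  | func g ts ih =>
    simp only [FOTerm.applyT, FOTerm.eval]
    congr 1
    funext i
    exact ih i

theorem sat_congr (I : FOInterp L) (F : FOForm L) : ∀ {h h' : ℕ → I.carrier},
    (∀ x ∈ F.fv, h x = h' x) → (F.Sat I h ↔ F.Sat I h') := by
  induction F with
  | tru => intro h h' _; rfl
  | fal => intro h h' _; rfl
  | eq s t =>
    intro h h' hh
    simp only [FOForm.Sat]
    rw [eval_congr _ s fun x hx => hh x (by simp [FOForm.fv, hx]),
      eval_congr _ t fun x hx => hh x (by simp [FOForm.fv, hx])]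
  | atom p ts =>
    intro h h' hh
    simp only [FOForm.Sat]
    have : (fun i => (ts i).eval I.toFOStruc h) = fun i => (ts i).eval I.toFOStruc h' := by
      funext i
      exact eval_congr _ (ts i) fun x hx => hh x (by
        simp only [FOForm.fv, Finset.mem_biUnion, Finset.mem_univ, true_and]
        exact ⟨i, hx⟩)
    rw [this]
  | not F ih => intro h h' hh; simp only [FOForm.Sat]; rw [ih hh]
  | and F G ihF ihG =>
    intro h h' hh
    simp only [FOForm.Sat]
    rw [ihF fun x hx => hh x (by simp [FOForm.fv, hx]),
      ihG fun x hx => hh x (by simp [FOForm.fv, hx])]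
  | or F G ihF ihG =>
    intro h h' hh
    simp only [FOForm.Sat]
    rw [ihF fun x hx => hh x (by simp [FOForm.fv, hx]),
      ihG fun x hx => hh x (by simp [FOForm.fv, hx])]
  | imp F G ihF ihG =>
    intro h h' hh
    simp only [FOForm.Sat]
    rw [ihF fun x hx => hh x (by simp [FOForm.fv, hx]),
      ihG fun x hx => hh x (by simp [FOForm.fv, hx])]
  | iff F G ihF ihG =>
    intro h h' hh
    simp only [FOForm.Sat]
    rw [ihF fun x hx => hh x (by simp [FOForm.fv, hx]),
      ihG fun x hx => hh x (by simp [FOForm.fv, hx])]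
  | ex x F ih =>
    intro h h' hh
    simp only [FOForm.Sat]
    refine exists_congr fun d => ih fun z hz => ?_
    by_cases hzx : z = x
    · subst hzx; simp
    · rw [Function.update_of_ne hzx, Function.update_of_ne hzx]
      exact hh z (Finset.mem_erase.2 ⟨hzx, hz⟩)
  | all x F ih =>
    intro h h' hh
    simp only [FOForm.Sat]
    refine forall_congr' fun d => ih fun z hz => ?_
    by_cases hzx : z = x
    · subst hzx; simp
    · rw [Function.update_of_ne hzx, Function.update_of_ne hzx]
      exact hh z (Finset.mem_erase.2 ⟨hzx, hz⟩)

theorem sat_applyF (I : FOInterp L) (F : FOForm L) : ∀ (f : ℕ → FOTerm L) (h : ℕ → I.carrier),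
    (F.applyF f).Sat I h ↔ F.Sat I fun x => (f x).eval I.toFOStruc h := by
  induction F with
  | tru => intro f h; rfl
  | fal => intro f h; rfl
  | eq s t =>
    intro f h
    simp only [FOForm.applyF, FOForm.Sat, eval_applyT]
  | atom p ts =>
    intro f h
    simp only [FOForm.applyF, FOForm.Sat, eval_applyT]
  | not F ih => intro f h; simp only [FOForm.applyF, FOForm.Sat, ih]
  | and F G ihF ihG => intro f h; simp only [FOForm.applyF, FOForm.Sat, ihF, ihG]
  | or F G ihF ihG => intro f h; simp only [FOForm.applyF, FOForm.Sat, ihF, ihG]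
  | imp F G ihF ihG => intro f h; simp only [FOForm.applyF, FOForm.Sat, ihF, ihG]
  | iff F G ihF ihG => intro f h; simp only [FOForm.applyF, FOForm.Sat, ihF, ihG]
  | ex x G ih =>
    intro f h
    set R : Finset ℕ := (G.fv.erase x).biUnion fun z => (f z).vars with hR
    set y : ℕ := if x ∈ R then freshVar R else x with hy
    have hyR : y ∉ R := by
      rw [hy]
      split
      · exact freshVar_spec R
      · assumption
    show (FOForm.ex y (G.applyF (Function.update f x (.var y)))).Sat I h ↔ _
    simp only [FOForm.Sat, ih]
    refine exists_congr fun d => sat_congr I G fun z hz => ?_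
    by_cases hzx : z = x
    · subst hzx; simp [FOTerm.eval]
    · rw [Function.update_of_ne hzx, Function.update_of_ne hzx]
      refine eval_congr _ _ fun w hw => ?_
      have hwy : w ≠ y := by
        intro hwy
        subst hwy
        exact hyR (Finset.mem_biUnion.2 ⟨z, Finset.mem_erase.2 ⟨hzx, hz⟩, hw⟩)
      rw [Function.update_of_ne hwy]
  | all x G ih =>
    intro f h
    set R : Finset ℕ := (G.fv.erase x).biUnion fun z => (f z).vars with hR
    set y : ℕ := if x ∈ R then freshVar R else x with hy
    have hyR : y ∉ R := by
      rw [hy]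
      split
      · exact freshVar_spec R
      · assumption
    show (FOForm.all y (G.applyF (Function.update f x (.var y)))).Sat I h ↔ _
    simp only [FOForm.Sat, ih]
    refine forall_congr' fun d => sat_congr I G fun z hz => ?_
    by_cases hzx : z = x
    · subst hzx; simp [FOTerm.eval]
    · rw [Function.update_of_ne hzx, Function.update_of_ne hzx]
      refine eval_congr _ _ fun w hw => ?_
      have hwy : w ≠ y := by
        intro hwy
        subst hwy
        exact hyR (Finset.mem_biUnion.2 ⟨z, Finset.mem_erase.2 ⟨hzx, hz⟩, hw⟩)
      rw [Function.update_of_ne hwy]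

theorem sat_eq_esat {E : FOForm L} (hE : IsEQ E) (I : FOInterp L) :
    ∀ h : ℕ → I.carrier, (E.Sat I h ↔ ESat I.toFOStruc h E) := by
  induction hE with
  | tru => intro h; rfl
  | fal => intro h; rfl
  | eq s t => intro h; rfl
  | and hF hG ihF ihG =>
    intro h
    simp only [FOForm.Sat, ESat] at *
    rw [ihF h, ihG h]
  | ex x hF ih =>
    intro h
    simp only [FOForm.Sat, ESat] at *
    exact exists_congr fun d => ih _

theorem foldr_all_sat (I : FOInterp L) (G : FOForm L) :
    ∀ (xs : List ℕ) (h : ℕ → I.carrier),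
      (xs.foldr .all G).Sat I h ↔
        ∀ g : ℕ → I.carrier, (∀ z, z ∉ xs → g z = h z) → G.Sat I g := by
  intro xs
  induction xs with
  | nil =>
    intro h
    simp only [List.foldr_nil]
    constructor
    · intro hs g hg
      have : g = h := funext fun z => hg z (by simp)
      rw [this]
      exact hs
    · intro hs
      exact hs h fun z _ => rfl
  | cons x xs ih =>
    intro h
    simp only [List.foldr_cons, FOForm.Sat, ih]
    constructor
    · intro hs g hg
      refine hs (g x) g fun z hz => ?_
      by_cases hzx : z = x
      · subst hzx; simp
      · rw [Function.update_of_ne hzx]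
        exact hg z (by simp [hz, hzx])
    · intro hs d g hg
      refine hs g fun z hz => ?_
      have hzx : z ≠ x := fun h' => hz (h' ▸ (List.mem_cons_self : x ∈ x :: xs))
      have hzxs : z ∉ xs := fun h' => hz (List.mem_cons_of_mem _ h')
      rw [hg z hzxs, Function.update_of_ne hzx]

theorem univClosure_sat (I : FOInterp L) (G : FOForm L) (h : ℕ → I.carrier) :
    (univClosure G).Sat I h ↔ ∀ g : ℕ → I.carrier, G.Sat I g := by
  rw [univClosure, foldr_all_sat]
  constructor
  · intro hs g
    classical
    set g' : ℕ → I.carrier := fun z => if z ∈ G.fv.sort (· ≤ ·) then g z else h z with hg'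
    have h1 : G.Sat I g' := hs g' fun z hz => by rw [hg']; simp only; rw [if_neg hz]
    refine (sat_congr I G fun z hz => ?_).1 h1
    rw [hg']
    simp only
    rw [if_pos ((Finset.mem_sort _).2 hz)]
  · intro hs g _
    exact hs g

/-- Invariant for the regular-extension fold. -/
structure RegInv (σ₀ acc : FinSubst L) : Prop where
  ext : ∀ x ∈ σ₀.dom, x ∈ acc.dom ∧ acc.map x = σ₀.map x
  fresh : ∀ x ∈ acc.dom, x ∉ σ₀.dom → ∃ y, acc.map x = .var y ∧ y ∉ σ₀.range
  inj : ∀ x₁ ∈ acc.dom, ∀ x₂ ∈ acc.dom, x₁ ∉ σ₀.dom → x₂ ∉ σ₀.dom →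
      acc.map x₁ = acc.map x₂ → x₁ = x₂

theorem mem_range_of_map_var {σ : FinSubst L} {x y : ℕ} (hx : x ∈ σ.dom)
    (hm : σ.map x = .var y) : y ∈ σ.range := by
  refine Finset.mem_biUnion.2 ⟨x, hx, ?_⟩
  rw [hm]
  simp [FOTerm.vars]

theorem range_subset_of_ext {σ₀ acc : FinSubst L}
    (hext : ∀ x ∈ σ₀.dom, x ∈ acc.dom ∧ acc.map x = σ₀.map x) : σ₀.range ⊆ acc.range := by
  intro v hv
  obtain ⟨x, hx, hvx⟩ := Finset.mem_biUnion.1 hv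
  exact Finset.mem_biUnion.2 ⟨x, (hext x hx).1, (hext x hx).2 ▸ hvx⟩

theorem regStep_inv {σ₀ acc : FinSubst L} (hinv : RegInv σ₀ acc) (x : ℕ) :
    RegInv σ₀ (regStep acc x) ∧ acc.dom ⊆ (regStep acc x).dom ∧ x ∈ (regStep acc x).dom := by
  by_cases hx : x ∈ acc.dom
  · rw [regStep, if_pos hx]
    exact ⟨hinv, Finset.Subset.refl _, hx⟩
  · rw [regStep, if_neg hx]
    set y : ℕ := if x ∈ acc.range then freshVar acc.range else x with hy
    have hyR : y ∉ acc.range := by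
      rw [hy]; split
      · exact freshVar_spec _
      · assumption
    have hdom : (acc.insertB x (.var y)).dom = insert x acc.dom := rfl
    have hmap : ∀ z, (acc.insertB x (.var y)).map z = Function.update acc.map x (.var y) z :=
      fun z => rfl
    refine ⟨⟨?_, ?_, ?_⟩, ?_, ?_⟩
    · intro z hz
      have hzd := (hinv.ext z hz).1
      have hzx : z ≠ x := fun h => hx (h ▸ hzd)
      rw [hdom, hmap, Function.update_of_ne hzx]
      exact ⟨Finset.mem_insert_of_mem hzd, (hinv.ext z hz).2⟩
    · intro z hz hz0
      rw [hdom] at hz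
      rcases Finset.mem_insert.1 hz with hzx | hzd
      · subst hzx
        refine ⟨y, by rw [hmap]; simp, fun hc => hyR (range_subset_of_ext hinv.ext hc)⟩
      · have hzx : z ≠ x := fun h => hx (h ▸ hzd)
        obtain ⟨w, hw1, hw2⟩ := hinv.fresh z hzd hz0
        exact ⟨w, by rw [hmap, Function.update_of_ne hzx]; exact hw1, hw2⟩
    · intro z₁ hz₁ z₂ hz₂ h01 h02 heq
      rw [hdom] at hz₁ hz₂
      rw [hmap, hmap] at heq
      rcases Finset.mem_insert.1 hz₁ with h1x | h1d <;>
        rcases Finset.mem_insert.1 hz₂ with h2x | h2d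
      · rw [h1x, h2x]
      · exfalso
        subst h1x
        obtain ⟨w, hw1, hw2⟩ := hinv.fresh z₂ h2d h02
        have h2x : z₂ ≠ z₁ := fun h => hx (h ▸ h2d)
        rw [Function.update_self, Function.update_of_ne h2x, hw1] at heq
        have : y = w := by injection heq
        exact hyR (this ▸ mem_range_of_map_var h2d hw1)
      · exfalso
        subst h2x
        obtain ⟨w, hw1, hw2⟩ := hinv.fresh z₁ h1d h01
        have h1x : z₁ ≠ z₂ := fun h => hx (h ▸ h1d)
        rw [Function.update_self, Function.update_of_ne h1x, hw1] at heq
        have : w = y := by injection heq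
        exact hyR (this ▸ mem_range_of_map_var h1d hw1)
      · have h1x : z₁ ≠ x := fun h => hx (h ▸ h1d)
        have h2x : z₂ ≠ x := fun h => hx (h ▸ h2d)
        rw [Function.update_of_ne h1x, Function.update_of_ne h2x] at heq
        exact hinv.inj z₁ h1d z₂ h2d h01 h02 heq
    · rw [hdom]
      exact Finset.subset_insert _ _
    · rw [hdom]
      exact Finset.mem_insert_self _ _

theorem regStep_dom_mono (acc : FinSubst L) (x : ℕ) : acc.dom ⊆ (regStep acc x).dom := by
  rw [regStep]
  split
  · exact Finset.Subset.refl _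
  · exact Finset.subset_insert _ _

theorem foldl_regStep_dom_mono :
    ∀ (l : List ℕ) (acc : FinSubst L), acc.dom ⊆ (l.foldl regStep acc).dom := by
  intro l
  induction l with
  | nil => intro acc; simp
  | cons b l ihb =>
    intro acc
    simp only [List.foldl_cons]
    exact Finset.Subset.trans (regStep_dom_mono acc b) (ihb (regStep acc b))

theorem foldl_regStep_inv {σ₀ : FinSubst L} :
    ∀ (l : List ℕ) (acc : FinSubst L), RegInv σ₀ acc →
      RegInv σ₀ (l.foldl regStep acc) ∧ ∀ x ∈ l, x ∈ (l.foldl regStep acc).dom := by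
  intro l
  induction l with
  | nil => intro acc h; exact ⟨h, by simp⟩
  | cons a l ih =>
    intro acc h
    obtain ⟨h1, h2, h3⟩ := regStep_inv h a
    obtain ⟨h4, h5⟩ := ih (regStep acc a) h1
    refine ⟨by simpa using h4, fun x hx => ?_⟩
    rcases List.mem_cons.1 hx with hxa | hxl
    · subst hxa
      simp only [List.foldl_cons]
      exact foldl_regStep_dom_mono l (regStep acc x) h3
    · simpa using h5 x hxl

theorem core_equiv (F E : FOForm L) (hE : IsEQ E) (σ : FinSubst L)
    (I : FOInterp L) (hcorr : SolE I.toFOStruc E = FinSubst.Inst I.toFOStruc σ) :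
    (∀ h : ℕ → I.carrier, (F.applyS σ).Sat I h) ↔
      (∀ h : ℕ → I.carrier, (E.imp F).Sat I h) := by
  classical
  have hdom₀ : ∀ x, x ∈ (σ.restrict ↑F.fv).dom ↔ x ∈ σ.dom ∧ x ∈ F.fv := by
    intro x
    simp [FinSubst.restrict]
  have hmap₀ : ∀ x ∈ σ.dom, x ∈ F.fv → (σ.restrict ↑F.fv).map x = σ.map x := by
    intro x hx1 hx2
    simp [FinSubst.restrict, hx1, hx2]
  have hinv0 : RegInv (σ.restrict ↑F.fv) (σ.restrict ↑F.fv) := ⟨fun x hx => ⟨hx, rfl⟩,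
    fun x hx hx' => absurd hx hx', fun x₁ hx₁ _ _ h01 _ _ => absurd hx₁ h01⟩
  have hfold := foldl_regStep_inv (F.fv.sort (· ≤ ·)) (σ.restrict ↑F.fv) hinv0
  have hinv : RegInv (σ.restrict ↑F.fv) (σ.extendFV F) := hfold.1
  have hdom' : ∀ x ∈ F.fv, x ∈ (σ.extendFV F).dom := by
    intro x hx
    exact hfold.2 x ((Finset.mem_sort _).2 hx)
  constructor
  · -- Fσ valid ⇒ E→F valid
    intro H h
    simp only [FOForm.Sat]
    intro hSatE
    have hE' : ESat I.toFOStruc h E := (sat_eq_esat hE I h).1 hSatE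
    have hInst : h ∈ FinSubst.Inst I.toFOStruc σ := by rw [← hcorr]; exact hE'
    obtain ⟨g, hg⟩ := hInst
    set h₀ : ℕ → I.carrier := fun z =>
      if hz : ∃ x, x ∈ F.fv ∧ x ∉ σ.dom ∧ (σ.extendFV F).map x = .var z then h hz.choose
      else g z with hh₀
    have key : ∀ x ∈ F.fv, ((σ.extendFV F).map x).eval I.toFOStruc h₀ = h x := by
      intro x hx
      by_cases hxd : x ∈ σ.dom
      · have hx0 : x ∈ (σ.restrict ↑F.fv).dom := (hdom₀ x).2 ⟨hxd, hx⟩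
        rw [(hinv.ext x hx0).2, hmap₀ x hxd hx, hg x hxd]
        refine eval_congr _ _ fun w hw => ?_
        simp only [hh₀]
        rw [dif_neg]
        rintro ⟨x', hx'1, hx'2, hx'3⟩
        have hx'0 : x' ∉ (σ.restrict ↑F.fv).dom := fun hc => hx'2 ((hdom₀ x').1 hc).1
        obtain ⟨y, hy1, hy2⟩ := hinv.fresh x' (hdom' x' hx'1) hx'0
        rw [hx'3] at hy1
        have hwy : w = y := by injection hy1
        apply hy2
        rw [← hwy]
        refine Finset.mem_biUnion.2 ⟨x, hx0, ?_⟩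
        rw [hmap₀ x hxd hx]
        exact hw
      · have hx0 : x ∉ (σ.restrict ↑F.fv).dom := fun hc => hxd ((hdom₀ x).1 hc).1
        obtain ⟨y, hy1, hy2⟩ := hinv.fresh x (hdom' x hx) hx0
        rw [hy1]
        show h₀ y = h x
        have hex : ∃ x', x' ∈ F.fv ∧ x' ∉ σ.dom ∧ (σ.extendFV F).map x' = .var y :=
          ⟨x, hx, hxd, hy1⟩
        simp only [hh₀]
        rw [dif_pos hex]
        obtain ⟨hc1, hc2, hc3⟩ := hex.choose_spec
        have : hex.choose = x := hinv.inj _ (hdom' _ hc1) x (hdom' x hx)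
          (fun hc => hc2 ((hdom₀ _).1 hc).1) hx0 (by rw [hc3, hy1])
        rw [this]
    have hFs := H h₀
    rw [FOForm.applyS, sat_applyF] at hFs
    exact (sat_congr I F key).1 hFs
  · -- E→F valid ⇒ Fσ valid
    intro H h
    rw [FOForm.applyS, sat_applyF]
    set h'' : ℕ → I.carrier := fun x =>
      if x ∈ σ.dom then (σ.map x).eval I.toFOStruc h
      else ((σ.extendFV F).map x).eval I.toFOStruc h with hh''
    have hAgree : ∀ x ∈ F.fv, h'' x = ((σ.extendFV F).map x).eval I.toFOStruc h := by
      intro x hx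
      by_cases hxd : x ∈ σ.dom
      · have hx0 : x ∈ (σ.restrict ↑F.fv).dom := (hdom₀ x).2 ⟨hxd, hx⟩
        simp only [hh'']
        rw [if_pos hxd, (hinv.ext x hx0).2, hmap₀ x hxd hx]
      · simp only [hh'']
        rw [if_neg hxd]
    have hInst : h'' ∈ FinSubst.Inst I.toFOStruc σ :=
      ⟨h, fun x hx => by simp only [hh'']; rw [if_pos hx]⟩
    have hE'' : ESat I.toFOStruc h'' E := by
      have hmem : h'' ∈ SolE I.toFOStruc E := by rw [hcorr]; exact hInst
      exact hmem
    have hSatE : E.Sat I h'' := (sat_eq_esat hE I h'').2 hE''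
    have hH := H h''
    simp only [FOForm.Sat] at hH
    exact (sat_congr I F hAgree).1 (hH hSatE)

end Aux

/-- If the substitution `σ` corresponds to the
EQ-formula `E` (i.e. `Sol_M(E) = Inst_M(σ)` for every model `M` of
`FEA(L)`), then `FEA(L) ⊨ Fσ` iff `FEA(L) ⊨ E → F`; equivalently,
`(∀)(Fσ) ↔ (∀)(E → F)` is true in every model of `FEA(L)`. -/
theorem application_correspondence {L : FOLang} (hc : L.HasConst)
    (F E : FOForm L) (hE : IsEQ E) (σ : FinSubst L)
    (hcorr : ∀ M : FOStruc L, IsFEA M → SolE M E = FinSubst.Inst M σ) :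
    ((∀ I : FOInterp L, IsFEA I.toFOStruc →
        ∀ h : ℕ → I.carrier, (F.applyS σ).Sat I h) ↔
      (∀ I : FOInterp L, IsFEA I.toFOStruc →
        ∀ h : ℕ → I.carrier, (E.imp F).Sat I h)) ∧
    (∀ I : FOInterp L, IsFEA I.toFOStruc → ∀ h : ℕ → I.carrier,
      ((univClosure (F.applyS σ)).iff (univClosure (E.imp F))).Sat I h) := by
  have core : ∀ I : FOInterp L, IsFEA I.toFOStruc →
      ((∀ h : ℕ → I.carrier, (F.applyS σ).Sat I h) ↔
        (∀ h : ℕ → I.carrier, (E.imp F).Sat I h)) :=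
    fun I hI => core_equiv F E hE σ I (hcorr I.toFOStruc hI)
  refine ⟨⟨fun H I hI h => (core I hI).1 (H I hI) h,
    fun H I hI h => (core I hI).2 (H I hI) h⟩, fun I hI h => ?_⟩
  simp only [FOForm.Sat]
  rw [univClosure_sat, univClosure_sat]
  exact core I hI
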